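/- Let T be a rigid object in C. For every object Y of C there exist an object X in C(T) and a map f : X → Y belonging to the class S. -/

import Mathlib

/-!
Common setup: `C` is a Hom-finite, Krull-Schmidt (= idempotent complete, given
Hom-finiteness over a field), `k`-linear triangulated category with suspension
functor `Σ = shiftFunctor C (1 : ℤ)`, and `T` is a rigid object of `C`.
-/

noncomputable section

open CategoryTheory CategoryTheory.Limits CategoryTheory.Pretriangulated

universe v u

namespace PaperBM

variable {C : Type u} [Category.{v} C] [Preadditive C] [HasZeroObject C]
  [HasShift C ℤ] [∀ n : ℤ, (shiftFunctor C n).Additive] [Pretriangulated C]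
  [HasFiniteBiproducts C]

/-- `X` lies in `add T`: it is a direct summand of a finite direct sum of copies of `T`. -/
def memAdd (T X : C) : Prop :=
  ∃ (n : ℕ) (s : X ⟶ ⨁ (fun _ : Fin n => T)) (r : (⨁ fun _ : Fin n => T) ⟶ X), s ≫ r = 𝟙 X

/-- `T` is rigid: `Hom_C(T, ΣT) = 0`. -/
def IsRigidObj (T : C) : Prop := ∀ f : T ⟶ (shiftFunctor C (1 : ℤ)).obj T, f = 0

/-- `Y ∈ T^⊥`, i.e. `Hom_C(X, ΣY) = 0` for all `X ∈ add T`. -/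
def memTperp (T Y : C) : Prop :=
  ∀ (X : C), memAdd T X → ∀ f : X ⟶ (shiftFunctor C (1 : ℤ)).obj Y, f = 0

/-- `Y ∈ ⊥T`, i.e. `Hom_C(Y, ΣX) = 0` for all `X ∈ add T`. -/
def memPerpT (T Y : C) : Prop :=
  ∀ (X : C), memAdd T X → ∀ f : Y ⟶ (shiftFunctor C (1 : ℤ)).obj X, f = 0

/-- `Y ∈ ΣT^⊥`, the image of `T^⊥` under the suspension `Σ`. -/
def memSigmaTperp (T Y : C) : Prop :=
  ∃ Z : C, memTperp T Z ∧ Nonempty (Y ≅ (shiftFunctor C (1 : ℤ)).obj Z)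

/-- The map `f` factors through an object belonging to the class `P` of objects. -/
def FactorsThru (P : C → Prop) {A B : C} (f : A ⟶ B) : Prop :=
  ∃ (Z : C) (g : A ⟶ Z) (h : Z ⟶ B), P Z ∧ g ≫ h = f

/-- The class `S̃` of maps `f : X ⟶ Y` such that in a completion
`Σ⁻¹Z →h X →f Y →g Z` of `f` to a triangle (where `A` plays the role of `Σ⁻¹Z`,
so that `Z = ΣA`), both `g` and `h` factor through an object of `ΣT^⊥`. -/
def Stilde (T : C) : MorphismProperty C := fun X Y f =>
  ∃ (A : C) (h : A ⟶ X) (g : Y ⟶ (shiftFunctor C (1 : ℤ)).obj A),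
    (Triangle.mk h f g ∈ distTriang C) ∧
    FactorsThru (memSigmaTperp T) g ∧ FactorsThru (memSigmaTperp T) h

/-- The class `S` of maps `f : X ⟶ Y` such that in a completion
`Σ⁻¹Z →h X →f Y →g Z` of `f` to a triangle (where `A` plays the role of `Σ⁻¹Z`,
so that `Z = ΣA`), `g` factors through an object of `ΣT^⊥` and `Σ⁻¹Z ∈ ΣT^⊥`. -/
def Sclass (T : C) : MorphismProperty C := fun X Y f =>
  ∃ (A : C) (h : A ⟶ X) (g : Y ⟶ (shiftFunctor C (1 : ℤ)).obj A),
    (Triangle.mk h f g ∈ distTriang C) ∧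
    FactorsThru (memSigmaTperp T) g ∧ memSigmaTperp T A

/-- `X ∈ C(T)`: there is a triangle `T₁ → T₀ → X → ΣT₁` with `T₀, T₁ ∈ add T`. -/
def memCT (T X : C) : Prop :=
  ∃ (T₁ T₀ : C) (a : T₁ ⟶ T₀) (b : T₀ ⟶ X) (c : X ⟶ (shiftFunctor C (1 : ℤ)).obj T₁),
    memAdd T T₁ ∧ memAdd T T₀ ∧ (Triangle.mk a b c ∈ distTriang C)

/-- `f : X₀ ⟶ Y` is a right `P`-approximation of `Y`. -/
def IsRightApprox (P : C → Prop) {X₀ Y : C} (f : X₀ ⟶ Y) : Prop :=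
  P X₀ ∧ ∀ (W : C), P W → ∀ g : W ⟶ Y, ∃ g' : W ⟶ X₀, g' ≫ f = g

/-- `f : Y ⟶ X₀` is a left `P`-approximation of `Y`. -/
def IsLeftApprox (P : C → Prop) {Y X₀ : C} (f : Y ⟶ X₀) : Prop :=
  P X₀ ∧ ∀ (W : C), P W → ∀ g : Y ⟶ W, ∃ g' : X₀ ⟶ W, f ≫ g' = g

/-- The map `f : X₀ ⟶ Y` is right minimal. -/
def IsRightMinimal {X₀ Y : C} (f : X₀ ⟶ Y) : Prop :=
  ∀ g : X₀ ⟶ X₀, g ≫ f = f → IsIso g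

/-- The functor `H = Hom_C(T, -) : C ⥤ Mod End_C(T)ᵒᵖ`.  Here, with Mathlib's
conventions, the endomorphism ring `End (Opposite.op T)` of `T` viewed in `Cᵒᵖ` plays
the role of `End_C(T)ᵒᵖ`, so that each `Hom_C(T, X)` is a left module over it. -/
abbrev homFunctor (T : C) : C ⥤ ModuleCat.{v} (End (Opposite.op T)) :=
  preadditiveCoyonedaObj T ⋙ ModuleCat.restrictScalars.{v}
    ({ toFun := fun r => MulOpposite.op r.unop
       map_one' := rfl
       map_mul' := fun _ _ => rfl
       map_zero' := rfl
       map_add' := fun _ _ => rfl } : End (Opposite.op T) →+* (End T)ᵐᵒᵖ)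

/-- The predicate on `End_C(T)ᵒᵖ`-modules of being finite-dimensional (equivalently,
since `End_C(T)` is a finite-dimensional algebra, finitely generated). -/
abbrev isFinDim (T : C) : ModuleCat.{v} (End (Opposite.op T)) → Prop :=
  fun M => Module.Finite (End (Opposite.op T)) M

/-- The category `mod End_C(T)ᵒᵖ` of finite-dimensional `End_C(T)ᵒᵖ`-modules. -/
abbrev fdMod (T : C) := ObjectProperty.FullSubcategory (isFinDim T)

/-- The ideal relation on `C(T)` of maps factoring through an object of `ΣT^⊥`. -/
def homRelCT (T : C) : HomRel (ObjectProperty.FullSubcategory (memCT T)) :=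
  fun A B f g => FactorsThru (memSigmaTperp T) ((f - g).hom : A.obj ⟶ B.obj)

/-- The ideal relation on `C(T)` of maps factoring through an object of `add ΣT`. -/
def homRelCTadd (T : C) : HomRel (ObjectProperty.FullSubcategory (memCT T)) :=
  fun A B f g => FactorsThru (memAdd ((shiftFunctor C (1 : ℤ)).obj T)) ((f - g).hom : A.obj ⟶ B.obj)

/-- The ideal relation on `C` of maps factoring through an object of `add ΣT`. -/
def homRelAdd (T : C) : HomRel C :=
  fun A B f g => FactorsThru (memAdd ((shiftFunctor C (1 : ℤ)).obj T)) (f - g)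

end PaperBM

open PaperBM

/-!
Take a right `add T`-approximation `f₀ : T₀ ⟶ Y` and complete it to a triangle
`Y₁ ⟶ T₀ ⟶ Y ⟶ ΣY₁`; rigidity of `T` gives `Hom(T, ΣY₁) = 0`, i.e. `Y₁ ∈ T^⊥`. Take a right
`add T`-approximation `f₁ : T₁ ⟶ Y₁`, let `X ∈ C(T)` be the cone of `T₁ ⟶ Y₁ ⟶ T₀` and
`f : X ⟶ Y` the induced map. Then `Hom(T, f)` is injective and `Hom(ΣT, f)` is surjective, so
the triangle `A ⟶ X ⟶ Y ⟶ ΣA` has `Hom(T, A) = 0`, i.e. `A ∈ ΣT^⊥`, while `Y ⟶ ΣA` factors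
through `ΣY₁ ∈ ΣT^⊥` because it kills `f₀`.
-/

namespace PaperBM

section AddClosure

variable {C : Type u} [Category.{v} C] [Preadditive C] [HasFiniteBiproducts C]

theorem exists_biproduct_approx (k : Type*) [Field k] [Linear k C] (T Y : C)
    [FiniteDimensional k (T ⟶ Y)] :
    ∃ (n : ℕ) (f₀ : (⨁ fun _ : Fin n => T) ⟶ Y), ∀ g : T ⟶ Y, ∃ l, l ≫ f₀ = g := by
  let b := Module.finBasis k (T ⟶ Y)
  refine ⟨_, biproduct.desc fun i => b i, fun g => ⟨biproduct.lift fun i => b.repr g i • 𝟙 T, ?_⟩⟩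
  simp only [biproduct.lift_desc, Linear.smul_comp, Category.id_comp]
  exact b.sum_repr g

theorem memAdd_biproduct (T : C) (n : ℕ) : memAdd T (⨁ fun _ : Fin n => T) :=
  ⟨n, 𝟙 _, 𝟙 _, Category.id_comp _⟩

theorem eq_zero_of_memAdd {T W X : C} (hW : ∀ u : T ⟶ W, u = 0) (hX : memAdd T X)
    (φ : X ⟶ W) : φ = 0 := by
  obtain ⟨n, s, r, hsr⟩ := hX
  have hr : r ≫ φ = 0 := biproduct.hom_ext' _ _ fun j => by
    rw [comp_zero]
    exact hW _
  rw [← Category.id_comp φ, ← hsr, Category.assoc, hr, comp_zero]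

variable [HasShift C ℤ]

theorem memTperp_of_forall_eq_zero {T Z : C} (h : ∀ u : T ⟶ Z⟦(1 : ℤ)⟧, u = 0) :
    memTperp T Z :=
  fun _ hX φ => eq_zero_of_memAdd h hX φ

theorem memSigmaTperp_of_forall_eq_zero {T A : C} (h : ∀ u : T ⟶ A, u = 0) :
    memSigmaTperp T A := by
  let e : A⟦(-1 : ℤ)⟧⟦(1 : ℤ)⟧ ≅ A := (shiftFunctorCompIsoId C (-1 : ℤ) 1 (by norm_num)).app A
  refine ⟨A⟦(-1 : ℤ)⟧, memTperp_of_forall_eq_zero fun u => ?_, ⟨e.symm⟩⟩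
  rw [← cancel_mono e.hom, h (u ≫ e.hom), zero_comp]

theorem IsRigidObj.eq_zero_of_biproduct [(shiftFunctor C (1 : ℤ)).Additive] {T : C}
    (hT : IsRigidObj T) (n : ℕ) (c : T ⟶ (⨁ fun _ : Fin n => T)⟦(1 : ℤ)⟧) : c = 0 := by
  rw [← cancel_mono ((shiftFunctor C (1 : ℤ)).mapBiproduct _).hom, zero_comp]
  ext j
  simp [hT _]

end AddClosure

section Triangles

variable {C : Type u} [Category.{v} C] [Preadditive C] [HasZeroObject C]
  [HasShift C ℤ] [∀ n : ℤ, (shiftFunctor C n).Additive] [Pretriangulated C]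

theorem hom_shift_obj₁_eq_zero_of_approx {T Y₁ T₀ Y : C} {a : Y₁ ⟶ T₀} {f₀ : T₀ ⟶ Y}
    {b : Y ⟶ Y₁⟦(1 : ℤ)⟧} (hD : Triangle.mk a f₀ b ∈ distTriang C)
    (hT₀ : ∀ u : T ⟶ T₀⟦(1 : ℤ)⟧, u = 0) (hf₀ : ∀ g : T ⟶ Y, ∃ l, l ≫ f₀ = g)
    (ξ : T ⟶ Y₁⟦(1 : ℤ)⟧) : ξ = 0 := by
  obtain ⟨η, rfl⟩ : ∃ η : T ⟶ Y, ξ = η ≫ b :=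
    Triangle.coyoneda_exact₃ _ (rot_of_distTriang _ hD) ξ (hT₀ _)
  obtain ⟨l, rfl⟩ := hf₀ η
  have hf₀b : f₀ ≫ b = 0 := comp_distTriang_mor_zero₂₃ _ hD
  rw [Category.assoc, hf₀b, comp_zero]

variable {T Y₁ T₀ Y T₁ X : C} {a : Y₁ ⟶ T₀} {f₀ : T₀ ⟶ Y} {b : Y ⟶ Y₁⟦(1 : ℤ)⟧}
  {f₁ : T₁ ⟶ Y₁} {p : T₀ ⟶ X} {q : X ⟶ T₁⟦(1 : ℤ)⟧} {f : X ⟶ Y}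

theorem eq_zero_of_comp_eq_zero_of_approx (hD : Triangle.mk a f₀ b ∈ distTriang C)
    (hD' : Triangle.mk (f₁ ≫ a) p q ∈ distTriang C) (hT₁ : ∀ u : T ⟶ T₁⟦(1 : ℤ)⟧, u = 0)
    (hf₁ : ∀ g : T ⟶ Y₁, ∃ l, l ≫ f₁ = g) (hpf : p ≫ f = f₀) (χ : T ⟶ X) (hχ : χ ≫ f = 0) :
    χ = 0 := by
  obtain ⟨v, rfl⟩ : ∃ v : T ⟶ T₀, χ = v ≫ p := Triangle.coyoneda_exact₃ _ hD' χ (hT₁ _)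
  obtain ⟨v', rfl⟩ : ∃ v' : T ⟶ Y₁, v = v' ≫ a :=
    Triangle.coyoneda_exact₂ _ hD v (by rwa [Category.assoc, hpf] at hχ)
  obtain ⟨l, rfl⟩ := hf₁ v'
  have hap : (f₁ ≫ a) ≫ p = 0 := comp_distTriang_mor_zero₁₂ _ hD'
  simp only [Category.assoc] at hap ⊢
  rw [hap, comp_zero]

theorem exists_comp_eq_of_approx (hD : Triangle.mk a f₀ b ∈ distTriang C)
    (hD' : Triangle.mk (f₁ ≫ a) p q ∈ distTriang C) (hf₁ : ∀ g : T ⟶ Y₁, ∃ l, l ≫ f₁ = g)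
    (hpf : p ≫ f = f₀) (hqf : q ≫ f₁⟦(1 : ℤ)⟧' = f ≫ b) (s : T⟦(1 : ℤ)⟧ ⟶ Y) :
    ∃ r, r ≫ f = s := by
  obtain ⟨t, ht⟩ := (shiftFunctor C (1 : ℤ)).map_surjective (s ≫ b)
  have hba : b ≫ a⟦(1 : ℤ)⟧' = 0 := comp_distTriang_mor_zero₃₁ _ hD
  have hta : t ≫ a = 0 := (shiftFunctor C (1 : ℤ)).map_injective <| by
    rw [Functor.map_comp, ht, Category.assoc, hba, comp_zero, Functor.map_zero]
  obtain ⟨t', rfl⟩ := hf₁ t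
  obtain ⟨r₁, hr₁⟩ : ∃ r₁ : T⟦(1 : ℤ)⟧ ⟶ X, t'⟦(1 : ℤ)⟧' = r₁ ≫ q :=
    Triangle.coyoneda_exact₁ _ hD' (t'⟦(1 : ℤ)⟧') <| by
      change t'⟦(1 : ℤ)⟧' ≫ (f₁ ≫ a)⟦(1 : ℤ)⟧' = 0
      rw [← Functor.map_comp, ← Category.assoc, hta, Functor.map_zero]
  obtain ⟨d, hd⟩ : ∃ d : T⟦(1 : ℤ)⟧ ⟶ T₀, s - r₁ ≫ f = d ≫ f₀ :=
    Triangle.coyoneda_exact₃ _ hD (s - r₁ ≫ f) <| by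
      change (s - r₁ ≫ f) ≫ b = 0
      rw [Preadditive.sub_comp, Category.assoc, ← hqf, ← Category.assoc, ← hr₁,
        ← Functor.map_comp, ht, sub_self]
  refine ⟨r₁ + d ≫ p, ?_⟩
  rw [Preadditive.add_comp, Category.assoc, hpf, ← hd]
  abel

theorem hom_obj₁_eq_zero_of_injective_of_surjective {T A X Y : C} {h : A ⟶ X} {f : X ⟶ Y}
    {g : Y ⟶ A⟦(1 : ℤ)⟧} (hD : Triangle.mk h f g ∈ distTriang C)
    (hinj : ∀ χ : T ⟶ X, χ ≫ f = 0 → χ = 0) (hsurj : ∀ s : T⟦(1 : ℤ)⟧ ⟶ Y, ∃ r, r ≫ f = s)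
    (u : T ⟶ A) : u = 0 := by
  have hhf : h ≫ f = 0 := comp_distTriang_mor_zero₁₂ _ hD
  have hfg : f ≫ g = 0 := comp_distTriang_mor_zero₂₃ _ hD
  have huh : u ≫ h = 0 := hinj _ (by rw [Category.assoc, hhf, comp_zero])
  obtain ⟨s, hs⟩ : ∃ s : T⟦(1 : ℤ)⟧ ⟶ Y, u⟦(1 : ℤ)⟧' = s ≫ g :=
    Triangle.coyoneda_exact₃ _ (rot_of_distTriang _ hD) (u⟦(1 : ℤ)⟧') <| by
      change u⟦(1 : ℤ)⟧' ≫ (-h⟦(1 : ℤ)⟧') = 0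
      rw [Preadditive.comp_neg, ← Functor.map_comp, huh, Functor.map_zero, neg_zero]
  obtain ⟨r, rfl⟩ := hsurj s
  apply (shiftFunctor C (1 : ℤ)).map_injective
  rw [hs, Category.assoc, hfg, comp_zero, Functor.map_zero]

end Triangles

end PaperBM

open PaperBM

/-- For every object `Y` of `C` there exist an object `X ∈ C(T)` and a map
`f : X ⟶ Y` belonging to the class `S`. -/
theorem statement_9 {C : Type u} [Category.{v} C] [Preadditive C] [HasZeroObject C]
    [HasShift C ℤ] [∀ n : ℤ, (shiftFunctor C n).Additive] [Pretriangulated C]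
    [HasFiniteBiproducts C]
    {k : Type*} [Field k] [CategoryTheory.Linear k C]
    [∀ X Y : C, FiniteDimensional k (X ⟶ Y)] [IsIdempotentComplete C]
    (T : C) (hT : IsRigidObj T) (Y : C) :
    ∃ (X : C) (f : X ⟶ Y), memCT T X ∧ Sclass T f := by
  obtain ⟨n₀, f₀, hf₀⟩ := exists_biproduct_approx k T Y
  obtain ⟨Y₁, a, b, hD₁⟩ := distinguished_cocone_triangle₁ f₀
  obtain ⟨n₁, f₁, hf₁⟩ := exists_biproduct_approx k T Y₁
  obtain ⟨X, p, q, hD₂⟩ := distinguished_cocone_triangle (f₁ ≫ a)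
  obtain ⟨f, hpf, hqf⟩ : ∃ f : X ⟶ Y, p ≫ f = 𝟙 _ ≫ f₀ ∧ q ≫ f₁⟦(1 : ℤ)⟧' = f ≫ b :=
    complete_distinguished_triangle_morphism _ _ hD₂ hD₁ f₁ (𝟙 _) (Category.comp_id _)
  rw [Category.id_comp] at hpf
  obtain ⟨A, h, g, hD₃⟩ := distinguished_cocone_triangle₁ f
  obtain ⟨σ, hσ⟩ : ∃ σ : Y₁⟦(1 : ℤ)⟧ ⟶ A⟦(1 : ℤ)⟧, g = b ≫ σ :=
    Triangle.yoneda_exact₃ _ hD₁ g <| by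
      change f₀ ≫ g = 0
      have hfg : f ≫ g = 0 := comp_distTriang_mor_zero₂₃ _ hD₃
      rw [← hpf, Category.assoc, hfg, comp_zero]
  have hY₁ : memTperp T Y₁ := memTperp_of_forall_eq_zero
    (hom_shift_obj₁_eq_zero_of_approx hD₁ (hT.eq_zero_of_biproduct n₀) hf₀)
  have hA : ∀ u : T ⟶ A, u = 0 := hom_obj₁_eq_zero_of_injective_of_surjective hD₃
    (eq_zero_of_comp_eq_zero_of_approx hD₁ hD₂ (hT.eq_zero_of_biproduct n₁) hf₁ hpf)
    (exists_comp_eq_of_approx hD₁ hD₂ hf₁ hpf hqf)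
  exact ⟨X, f, ⟨_, _, _, p, q, memAdd_biproduct T n₁, memAdd_biproduct T n₀, hD₂⟩,
    A, h, g, hD₃, ⟨_, b, σ, ⟨Y₁, hY₁, ⟨Iso.refl _⟩⟩, hσ.symm⟩, memSigmaTperp_of_forall_eq_zero hA⟩
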